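/- Let T_2 : [0,1] → [0,1] be the tent map T_2(x) = 1 − |2x − 1|, which preserves Lebesgue measure μ. For Lebesgue-almost every x̃ ∈ [0,1], with the observable φ(x) = −log|x − x̃|, the following holds: for μ-almost every x ∈ [0,1] there exist C > 0 and u_0 > 0 such that for all u ≥ u_0, |log τ_u^φ(x) − u| ≤ C·log u, where τ_u^φ(x) = min{n ≥ 0 : φ(T_2^n(x)) ≥ u}. -/

import Mathlib

open MeasureTheory Filter Set Real

noncomputable section

/-- The tent map `T₂(x) = 1 − |2x − 1|`. -/
def tent (x : ℝ) : ℝ := 1 - |2 * x - 1|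

/-- Hitting time of the observable to level `u`:
`τ_u^φ(x) = min {n ≥ 0 : φ(f^n x) ≥ u}`. -/
def hitLevel {X : Type*} (f : X → X) (φ : X → ℝ) (u : ℝ) (x : X) : ℕ :=
  sInf {n : ℕ | u ≤ φ (f^[n] x)}

/-!
On a dyadic interval of rank `n`, `tent^[n]` is affine with slope `±2ⁿ` onto `[0,1]`. Hence
preimages under `tent^[n]` do not gain Lebesgue measure, and the orbit sampled every `m` steps
visits a fixed rank-`m` dyadic interval like a sequence of independent trials with success
probability `2⁻ᵐ`. By Borel–Cantelli, for a.e. `x` and all large `m`, the orbit enters the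
rank-`m` dyadic interval containing `x̃` (so comes `2⁻ᵐ`-close to `x̃`) within `m²2ᵐ` steps, but
stays `(2ᵐ(m+1)²)⁻¹`-far from `x̃` during the first `2ᵐ` steps. Taking `m ≈ u / log 2` in both
bounds gives `log τ_u = u + O(log u)`.
-/

def dyadicInterval (n k : ℕ) : Set ℝ := Icc (k / 2 ^ n) ((k + 1) / 2 ^ n)

lemma mem_dyadicInterval {n k : ℕ} {x : ℝ} :
    x ∈ dyadicInterval n k ↔ k ≤ 2 ^ n * x ∧ 2 ^ n * x ≤ k + 1 := by
  have h : (0 : ℝ) < 2 ^ n := by positivity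
  rw [dyadicInterval, mem_Icc, div_le_iff₀' h, le_div_iff₀' h]

lemma abs_sub_le_of_mem_dyadicInterval {n k : ℕ} {x y : ℝ} (hx : x ∈ dyadicInterval n k)
    (hy : y ∈ dyadicInterval n k) : |x - y| ≤ (2 ^ n)⁻¹ := by
  rw [mem_dyadicInterval] at hx hy
  rw [abs_le, ← mul_le_mul_iff_of_pos_left (by positivity : (0 : ℝ) < 2 ^ n),
    ← mul_le_mul_iff_of_pos_left (by positivity : (0 : ℝ) < 2 ^ n)]
  constructor <;> field_simp <;> linarith

lemma exists_mem_dyadicInterval (n : ℕ) {x : ℝ} (hx : x ∈ Icc 0 1) :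
    ∃ k < 2 ^ n, x ∈ dyadicInterval n k := by
  have h2n : (0 : ℝ) < 2 ^ n := by positivity
  have hnn : 0 ≤ 2 ^ n * x := by have := hx.1; positivity
  by_cases hfl : ⌊2 ^ n * x⌋₊ < 2 ^ n
  · exact ⟨_, hfl, mem_dyadicInterval.2 ⟨Nat.floor_le hnn, (Nat.lt_floor_add_one _).le⟩⟩
  · refine ⟨2 ^ n - 1, Nat.sub_lt (by positivity) one_pos, mem_dyadicInterval.2 ?_⟩
    have hge : (2 : ℝ) ^ n ≤ 2 ^ n * x := by exact_mod_cast (Nat.le_floor_iff hnn).1 (not_lt.1 hfl)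
    push_cast [Nat.one_le_two_pow]
    constructor <;> nlinarith [hx.2]

lemma tent_mapsTo : MapsTo tent (Icc 0 1) (Icc 0 1) := fun x ⟨h₀, h₁⟩ => by
  have : |2 * x - 1| ≤ 1 := abs_le.2 ⟨by linarith, by linarith⟩
  rw [tent, mem_Icc]
  constructor <;> linarith [abs_nonneg (2 * x - 1)]

lemma tent_of_le_half {x : ℝ} (hx : x ≤ 1 / 2) : tent x = 2 * x := by
  rw [tent, abs_of_nonpos (by linarith)]; ring

lemma tent_of_half_le {x : ℝ} (hx : 1 / 2 ≤ x) : tent x = 2 - 2 * x := by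
  rw [tent, abs_of_nonneg (by linarith)]; ring

lemma tent_iterate_eq_affine_on_dyadicInterval (n : ℕ) {k : ℕ} (hk : k < 2 ^ n) :
    ∃ a c : ℝ, |a| = 2 ^ n ∧ ∀ x ∈ dyadicInterval n k, tent^[n] x = a * x + c := by
  induction n generalizing k with
  | zero => exact ⟨1, 0, by simp, fun x _ => by simp⟩
  | succ n ih =>
    simp only [mem_dyadicInterval, Function.iterate_succ_apply, pow_succ] at *
    rcases lt_or_ge k (2 ^ n) with hlt | hge
    · obtain ⟨a, c, ha, hx⟩ := ih hlt
      have hk : (k : ℝ) + 1 ≤ 2 ^ n := by exact_mod_cast hlt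
      refine ⟨2 * a, c, by rw [abs_mul, ha]; norm_num; ring, fun x ⟨h₁, h₂⟩ => ?_⟩
      rw [tent_of_le_half (by nlinarith), hx _ ⟨by linarith, by linarith⟩]
      ring
    · obtain ⟨a, c, ha, hx⟩ := ih (k := 2 ^ n * 2 - 1 - k) (by omega)
      have hk : (2 : ℝ) ^ n ≤ k := by exact_mod_cast hge
      have hcast : ((2 ^ n * 2 - 1 - k : ℕ) : ℝ) = 2 ^ n * 2 - 1 - k := by
        rw [Nat.cast_sub (by omega), Nat.cast_sub (by omega)]; push_cast; ring
      refine ⟨-2 * a, 2 * a + c, by rw [abs_mul, ha]; norm_num; ring, fun x ⟨h₁, h₂⟩ => ?_⟩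
      rw [tent_of_half_le (by nlinarith), hx _ (by rw [hcast]; constructor <;> linarith)]
      ring

lemma volume_dyadicInterval_inter_tent_iterate_preimage_le {n k : ℕ} (hk : k < 2 ^ n)
    (s : Set ℝ) : volume (dyadicInterval n k ∩ tent^[n] ⁻¹' s) ≤ volume s / 2 ^ n := by
  obtain ⟨a, c, ha, heq⟩ := tent_iterate_eq_affine_on_dyadicInterval n hk
  have ha₀ : a ≠ 0 := by rw [← abs_pos, ha]; positivity
  have hsub : dyadicInterval n k ∩ tent^[n] ⁻¹' s ⊆ (a * ·) ⁻¹' ((· + c) ⁻¹' s) :=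
    fun x ⟨hx, hxs⟩ => by simpa [heq x hx] using hxs
  calc volume (dyadicInterval n k ∩ tent^[n] ⁻¹' s)
      ≤ volume ((a * ·) ⁻¹' ((· + c) ⁻¹' s)) := measure_mono hsub
    _ = volume s / 2 ^ n := by
      rw [Real.volume_preimage_mul_left ha₀, measure_preimage_add_right, abs_inv, ha,
        ENNReal.ofReal_inv_of_pos (by positivity), ENNReal.ofReal_pow zero_le_two,
        ENNReal.ofReal_ofNat, ENNReal.div_eq_inv_mul]

lemma volume_Icc_inter_tent_iterate_preimage_le (n : ℕ) (s : Set ℝ) :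
    volume (Icc 0 1 ∩ tent^[n] ⁻¹' s) ≤ volume s := by
  have hcover : Icc 0 1 ∩ tent^[n] ⁻¹' s ⊆
      ⋃ k ∈ Finset.range (2 ^ n), dyadicInterval n k ∩ tent^[n] ⁻¹' s := fun x ⟨hx, hxs⟩ => by
    obtain ⟨k, hk, hxk⟩ := exists_mem_dyadicInterval n hx
    exact mem_biUnion (Finset.mem_range.2 hk) ⟨hxk, hxs⟩
  calc volume (Icc 0 1 ∩ tent^[n] ⁻¹' s)
      ≤ ∑ k ∈ Finset.range (2 ^ n), volume (dyadicInterval n k ∩ tent^[n] ⁻¹' s) :=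
        (measure_mono hcover).trans (measure_biUnion_finset_le _ _)
    _ ≤ ∑ _k ∈ Finset.range (2 ^ n), volume s / 2 ^ n := Finset.sum_le_sum fun k hk =>
        volume_dyadicInterval_inter_tent_iterate_preimage_le (Finset.mem_range.1 hk) s
    _ = volume s := by
      rw [Finset.sum_const, Finset.card_range, nsmul_eq_mul, Nat.cast_pow, Nat.cast_ofNat,
        ENNReal.mul_div_cancel (by positivity) (by simp)]

lemma volume_avoid_dyadicInterval_le {m d : ℕ} (hd : d < 2 ^ m) (K : ℕ) :
    volume {x ∈ Icc 0 1 | ∀ j < K, (tent^[m])^[j] x ∉ dyadicInterval m d} ≤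
      ENNReal.ofReal ((1 - (2 ^ m)⁻¹) ^ K) := by
  induction K with
  | zero =>
    rw [pow_zero, ENNReal.ofReal_one]
    exact (measure_mono (sep_subset _ _)).trans (by simp)
  | succ K ih =>
    set A : ℕ → Set ℝ := fun K => {x ∈ Icc 0 1 | ∀ j < K, (tent^[m])^[j] x ∉ dyadicInterval m d}
    have hcover : A (K + 1) ⊆ ⋃ k ∈ (Finset.range (2 ^ m)).erase d,
        dyadicInterval m k ∩ tent^[m] ⁻¹' A K := fun x ⟨hx, hxJ⟩ => by
      obtain ⟨k, hk, hxk⟩ := exists_mem_dyadicInterval m hx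
      have hkd : k ≠ d := by rintro rfl; exact hxJ 0 K.succ_pos hxk
      refine mem_biUnion (Finset.mem_erase.2 ⟨hkd, Finset.mem_range.2 hk⟩)
        ⟨hxk, tent_mapsTo.iterate m hx, fun j hj => ?_⟩
      simpa only [← Function.iterate_succ_apply] using hxJ (j + 1) (by omega)
    calc volume (A (K + 1))
        ≤ ∑ k ∈ (Finset.range (2 ^ m)).erase d, volume (dyadicInterval m k ∩ tent^[m] ⁻¹' A K) :=
          (measure_mono hcover).trans (measure_biUnion_finset_le _ _)
      _ ≤ ∑ _k ∈ (Finset.range (2 ^ m)).erase d, ENNReal.ofReal ((1 - (2 ^ m)⁻¹) ^ K) / 2 ^ m :=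
          Finset.sum_le_sum fun k hk => (volume_dyadicInterval_inter_tent_iterate_preimage_le
            (Finset.mem_range.1 (Finset.mem_of_mem_erase hk)) _).trans (by gcongr)
      _ = ENNReal.ofReal ((1 - (2 ^ m)⁻¹) ^ (K + 1)) := by
        rw [Finset.sum_const, Finset.card_erase_of_mem (Finset.mem_range.2 hd), Finset.card_range,
          nsmul_eq_mul, ← ENNReal.ofReal_natCast, ← ENNReal.ofReal_ofNat 2, ← ENNReal.ofReal_pow
          zero_le_two, ← ENNReal.ofReal_div_of_pos (by positivity), ← ENNReal.ofReal_mul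
          (by positivity), Nat.cast_sub Nat.one_le_two_pow]
        congr 1
        push_cast
        rw [pow_succ]
        field_simp

lemma volume_avoid_dyadicInterval_le_exp {m d : ℕ} (hd : d < 2 ^ m) :
    volume {x ∈ Icc 0 1 | ∀ j < 2 ^ m * m, (tent^[m])^[j] x ∉ dyadicInterval m d} ≤
      ENNReal.ofReal (exp (-1) ^ m) := by
  refine (volume_avoid_dyadicInterval_le hd _).trans (ENNReal.ofReal_le_ofReal ?_)
  have h := one_sub_div_pow_le_exp_neg (n := 2 ^ m) (t := 1) (by exact_mod_cast Nat.one_le_two_pow)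
  rw [pow_mul]
  push_cast at h
  gcongr
  · exact pow_nonneg (sub_nonneg.2 (inv_le_one_of_one_le₀ (one_le_pow₀ one_le_two))) _
  · simpa [one_div] using h

lemma ae_eventually_notMem_of_summable {α : Type*} [MeasurableSpace α] {μ : Measure α}
    {s : ℕ → Set α} {f : ℕ → ℝ} (hf₀ : 0 ≤ f) (hf : Summable f)
    (hs : ∀ m, μ (s m) ≤ ENNReal.ofReal (f m)) : ∀ᵐ x ∂μ, ∀ᶠ m in atTop, x ∉ s m := by
  refine ae_eventually_notMem (ne_top_of_le_ne_top ?_ (ENNReal.tsum_le_tsum hs))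
  rw [← ENNReal.ofReal_tsum_of_nonneg hf₀ hf]
  exact ENNReal.ofReal_ne_top

lemma ae_eventually_exists_tent_iterate_near {xt : ℝ} (hxt : xt ∈ Icc 0 1) :
    ∀ᵐ x ∂volume.restrict (Icc 0 1),
      ∀ᶠ m : ℕ in atTop, ∃ n ≤ m ^ 2 * 2 ^ m, |tent^[n] x - xt| ≤ (2 ^ m)⁻¹ := by
  choose d hd hxtd using fun m => exists_mem_dyadicInterval m hxt
  have hmiss := ae_eventually_notMem_of_summable (μ := volume.restrict (Icc 0 1))
    (s := fun m => {x ∈ Icc 0 1 | ∀ j < 2 ^ m * m, (tent^[m])^[j] x ∉ dyadicInterval m (d m)})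
    (fun m => by positivity)
    (summable_geometric_of_lt_one (exp_pos _).le (exp_lt_one_iff.2 (by norm_num)))
    fun m => (Measure.restrict_apply_le _ _).trans (volume_avoid_dyadicInterval_le_exp (hd m))
  filter_upwards [hmiss, ae_restrict_mem measurableSet_Icc] with x hx hxI
  filter_upwards [hx] with m hm
  obtain ⟨j, hj, hjd⟩ : ∃ j < 2 ^ m * m, (tent^[m])^[j] x ∈ dyadicInterval m (d m) := by
    simpa [hxI] using hm
  refine ⟨m * j, ?_, ?_⟩
  · calc m * j ≤ m * (2 ^ m * m) := Nat.mul_le_mul_left m hj.le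
      _ = m ^ 2 * 2 ^ m := by ring
  · rw [Function.iterate_mul]
    exact abs_sub_le_of_mem_dyadicInterval hjd (hxtd m)

def avoidRadius (m : ℕ) : ℝ := (2 ^ m * (m + 1) ^ 2)⁻¹

lemma ae_eventually_tent_iterate_far (xt : ℝ) :
    ∀ᵐ x ∂volume.restrict (Icc 0 1),
      ∀ᶠ m : ℕ in atTop, ∀ n < 2 ^ m, avoidRadius m < |tent^[n] x - xt| := by
  have hsum : Summable fun m : ℕ => 2 / ((m : ℝ) + 1) ^ 2 := by
    refine (((summable_nat_add_iff 1).2 (summable_one_div_nat_pow.2 one_lt_two)).mul_left 2).congr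
      fun m => ?_
    push_cast
    ring
  have hmiss := ae_eventually_notMem_of_summable (μ := volume.restrict (Icc 0 1))
    (s := fun m => ⋃ n ∈ Finset.range (2 ^ m),
      Icc 0 1 ∩ tent^[n] ⁻¹' Metric.closedBall xt (avoidRadius m))
    (fun m => by positivity) hsum fun m => by
      refine (Measure.restrict_apply_le _ _).trans ((measure_biUnion_finset_le _ _).trans ?_)
      calc ∑ n ∈ Finset.range (2 ^ m), volume (Icc 0 1 ∩ tent^[n] ⁻¹'
            Metric.closedBall xt (avoidRadius m))
          ≤ ∑ _n ∈ Finset.range (2 ^ m), ENNReal.ofReal (2 * avoidRadius m) :=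
            Finset.sum_le_sum fun n _ => (volume_Icc_inter_tent_iterate_preimage_le n _).trans
              (Real.volume_closedBall _ _).le
        _ = ENNReal.ofReal (2 / ((m : ℝ) + 1) ^ 2) := by
          rw [Finset.sum_const, Finset.card_range, nsmul_eq_mul, ← ENNReal.ofReal_natCast,
            ← ENNReal.ofReal_mul (by positivity)]
          congr 1
          push_cast [avoidRadius]
          field_simp
  filter_upwards [hmiss, ae_restrict_mem measurableSet_Icc] with x hx hxI
  filter_upwards [hx] with m hm n hn
  by_contra hle
  exact hm (mem_biUnion (Finset.mem_range.2 hn)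
    ⟨hxI, by rwa [mem_preimage, Metric.mem_closedBall, Real.dist_eq, ← not_lt]⟩)

-- Needed because `-log |y - x̃|` takes the junk value `0` at `y = x̃`.
lemma ae_tent_iterate_ne (xt : ℝ) : ∀ᵐ x ∂volume.restrict (Icc 0 1), ∀ n, tent^[n] x ≠ xt := by
  refine ae_all_iff.2 fun n => ?_
  rw [ae_iff, Measure.restrict_apply' measurableSet_Icc, inter_comm]
  refine measure_mono_null (fun x hx => ?_) (volume_Icc_inter_tent_iterate_preimage_le n {xt}
    |>.trans_eq Real.volume_singleton |> nonpos_iff_eq_zero.1)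
  simpa using hx

section hitLevel

variable {X : Type*} {f : X → X} {φ : X → ℝ} {u : ℝ} {x : X}

lemma hitLevel_le {n : ℕ} (h : u ≤ φ (f^[n] x)) : hitLevel f φ u x ≤ n := Nat.sInf_le h

lemma le_hitLevel {N : ℕ} (hex : ∃ n, u ≤ φ (f^[n] x)) (h : ∀ n < N, φ (f^[n] x) < u) :
    N ≤ hitLevel f φ u x :=
  not_lt.1 fun hlt => (h _ hlt).not_ge (Nat.sInf_mem hex)

end hitLevel

lemma le_neg_log_abs_sub_iff {y z u : ℝ} (h : y ≠ z) :
    u ≤ -log |y - z| ↔ |y - z| ≤ exp (-u) := by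
  rw [le_neg, log_le_iff_le_exp (abs_pos.2 (sub_ne_zero.2 h))]

lemma eventually_log_le_add_of_le_sq_mul_two_pow (τ : ℝ → ℕ)
    (h : ∀ᶠ m : ℕ in atTop, ∀ u ≤ m * log 2, τ u ≤ m ^ 2 * 2 ^ m) :
    ∀ᶠ u in atTop, log (τ u) ≤ u + 3 * log u := by
  have hL := log_two_gt_d9
  have hm : Tendsto (fun u => ⌈u / log 2⌉₊) atTop atTop :=
    tendsto_nat_ceil_atTop.comp (tendsto_id.atTop_div_const (log_pos one_lt_two))
  filter_upwards [hm.eventually h, eventually_ge_atTop 8] with u hu hu8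
  set m := ⌈u / log 2⌉₊
  have hum : u ≤ m * log 2 := (div_le_iff₀ (log_pos one_lt_two)).1 (Nat.le_ceil _)
  have hmu : (m : ℝ) * log 2 < u + log 2 := by
    calc (m : ℝ) * log 2 < (u / log 2 + 1) * log 2 :=
          mul_lt_mul_of_pos_right (Nat.ceil_lt_add_one (by positivity)) (log_pos one_lt_two)
      _ = u + log 2 := by field_simp
  have hm₁ : (1 : ℝ) ≤ m := Nat.one_le_cast.2 (Nat.ceil_pos.2 (by positivity))
  have hlogm : log m ≤ log 2 + log u := by
    rw [← log_mul two_ne_zero (by positivity)]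
    exact log_le_log (by positivity) (by nlinarith)
  have hlog8 : 3 * log 2 ≤ log u := by
    rw [← log_rpow two_pos]; exact log_le_log (by positivity) (by norm_num; linarith)
  calc log (τ u) ≤ log (m ^ 2 * 2 ^ m) := by
        rcases Nat.eq_zero_or_pos (τ u) with h0 | hpos
        · rw [h0, Nat.cast_zero, log_zero]
          exact log_nonneg (one_le_mul_of_one_le_of_one_le (one_le_pow₀ hm₁)
            (one_le_pow₀ one_le_two))
        · exact log_le_log (by exact_mod_cast hpos) (by exact_mod_cast hu u hum)
    _ = 2 * log m + m * log 2 := by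
        rw [log_mul (by positivity) (by positivity), log_pow, log_pow]; push_cast; ring
    _ ≤ u + 3 * log u := by linarith

lemma eventually_sub_le_log_of_two_pow_le (τ : ℝ → ℕ)
    (h : ∀ᶠ m : ℕ in atTop, ∀ u, m * log 2 + 2 * log (m + 1) ≤ u → 2 ^ m ≤ τ u) :
    ∀ᶠ u in atTop, u - 6 * log u ≤ log (τ u) := by
  have hL := log_two_gt_d9
  have hL₀ : 0 < log 2 := log_pos one_lt_two
  have hsmall : ∀ᶠ u in atTop, log u ≤ u / 10 := by
    filter_upwards [isLittleO_log_id_atTop.bound (by norm_num : (0 : ℝ) < 1 / 10),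
      eventually_ge_atTop 1] with u hu hu₁
    rw [norm_of_nonneg (log_nonneg hu₁), id, norm_of_nonneg (by linarith)] at hu
    linarith
  have hm : Tendsto (fun u => ⌊(u - 5 * log u) / log 2⌋₊) atTop atTop :=
    tendsto_nat_floor_atTop.comp <| Tendsto.atTop_div_const hL₀ <|
      tendsto_atTop_mono' _ (hsmall.mono fun u hu => show u / 2 ≤ u - 5 * log u by linarith)
        (tendsto_id.atTop_div_const two_pos)
  filter_upwards [hm.eventually h, hsmall, eventually_ge_atTop 3] with u hu hlog hu₃
  set m := ⌊(u - 5 * log u) / log 2⌋₊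
  have hlogu : log 2 ≤ log u := log_le_log two_pos (by linarith)
  have hmu : m * log 2 ≤ u - 5 * log u :=
    (le_div_iff₀ hL₀).1 (Nat.floor_le (div_nonneg (by linarith) hL₀.le))
  have hum : u - 5 * log u < (m + 1) * log 2 := (div_lt_iff₀ hL₀).1 (Nat.lt_floor_add_one _)
  have hlogm : log (m + 1) ≤ 2 * log u := by
    rw [← log_rpow (by positivity), rpow_two]; exact log_le_log (by positivity) (by nlinarith)
  calc u - 6 * log u ≤ m * log 2 := by linarith
    _ = log (2 ^ m) := by rw [log_pow]
    _ ≤ log (τ u) := log_le_log (by positivity) (by exact_mod_cast hu u (by linarith))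

lemma exists_abs_log_sub_le_of_dyadic_bounds (τ : ℝ → ℕ)
    (hup : ∀ᶠ m : ℕ in atTop, ∀ u ≤ m * log 2, τ u ≤ m ^ 2 * 2 ^ m)
    (hlow : ∀ᶠ m : ℕ in atTop, ∀ u, m * log 2 + 2 * log (m + 1) ≤ u → 2 ^ m ≤ τ u) :
    ∃ C : ℝ, 0 < C ∧ ∃ u₀ : ℝ, 0 < u₀ ∧ ∀ u ≥ u₀, |log (τ u) - u| ≤ C * log u := by
  obtain ⟨u₀, hu₀⟩ := eventually_atTop.1 ((eventually_log_le_add_of_le_sq_mul_two_pow τ hup).and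
    (eventually_sub_le_log_of_two_pow_le τ hlow))
  refine ⟨6, by norm_num, max u₀ 1, by positivity, fun u hu => ?_⟩
  obtain ⟨hle, hge⟩ := hu₀ u (le_of_max_le_left hu)
  have := log_nonneg (le_of_max_le_right hu)
  exact abs_le.2 ⟨by linarith, by linarith⟩

lemma exists_abs_log_hitLevel_sub_le {f : ℝ → ℝ} {x xt : ℝ} (hne : ∀ n, f^[n] x ≠ xt)
    (hnear : ∀ᶠ m : ℕ in atTop, ∃ n ≤ m ^ 2 * 2 ^ m, |f^[n] x - xt| ≤ (2 ^ m)⁻¹)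
    (hfar : ∀ᶠ m : ℕ in atTop, ∀ n < 2 ^ m, avoidRadius m < |f^[n] x - xt|) :
    ∃ C : ℝ, 0 < C ∧ ∃ u₀ : ℝ, 0 < u₀ ∧ ∀ u ≥ u₀,
      |log (hitLevel f (fun y => -log |y - xt|) u x) - u| ≤ C * log u := by
  have hexp : ∀ m : ℕ, exp (m * log 2) = 2 ^ m := fun m => by rw [exp_nat_mul, exp_log two_pos]
  have hhit {m n : ℕ} {u : ℝ} (hn : |f^[n] x - xt| ≤ (2 ^ m)⁻¹) (hu : u ≤ m * log 2) :
      u ≤ -log |f^[n] x - xt| := by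
    rw [le_neg_log_abs_sub_iff (hne n)]
    calc |f^[n] x - xt| ≤ exp (-(m * log 2)) := by rwa [exp_neg, hexp]
      _ ≤ exp (-u) := exp_le_exp.2 (neg_le_neg hu)
  apply exists_abs_log_sub_le_of_dyadic_bounds
  · filter_upwards [hnear] with m ⟨n, hn, hdist⟩ u hu
    exact (hitLevel_le (hhit hdist hu)).trans hn
  · filter_upwards [hfar] with m hm u hu
    obtain ⟨M, ⟨n, -, hdist⟩, hM⟩ := (hnear.and (eventually_ge_atTop ⌈u / log 2⌉₊)).exists
    have huM : u ≤ M * log 2 :=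
      (div_le_iff₀ (log_pos one_lt_two)).1 ((Nat.le_ceil _).trans (by exact_mod_cast hM))
    refine le_hitLevel ⟨n, hhit hdist huM⟩ fun k hk => ?_
    rw [← not_le, le_neg_log_abs_sub_iff (hne k), not_le]
    calc exp (-u) ≤ exp (-(m * log 2 + 2 * log (m + 1))) := exp_le_exp.2 (neg_le_neg hu)
      _ = avoidRadius m := by
        rw [avoidRadius, exp_neg, exp_add, hexp, ← log_rpow (by positivity), exp_log (by positivity),
          rpow_two]
      _ < |f^[k] x - xt| := hm k hk

/-- Lemma: for the tent map and the observable `φ(x) = −log|x − x̃|`, for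
Lebesgue-a.e. `x̃ ∈ [0,1]` and Lebesgue-a.e. `x ∈ [0,1]`,
`log τ_u^φ(x) = u + O(log u)` as `u → ∞`. -/
theorem tent_hitting_time_asymptotics :
    ∀ᵐ xt ∂(volume.restrict (Set.Icc (0 : ℝ) 1)),
      ∀ᵐ x ∂(volume.restrict (Set.Icc (0 : ℝ) 1)),
        ∃ C : ℝ, 0 < C ∧ ∃ u₀ : ℝ, 0 < u₀ ∧ ∀ u ≥ u₀,
          |Real.log ((hitLevel tent (fun y => - Real.log |y - xt|) u x : ℕ) : ℝ) - u|
            ≤ C * Real.log u := by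
  filter_upwards [ae_restrict_mem measurableSet_Icc] with xt hxt
  filter_upwards [ae_eventually_exists_tent_iterate_near hxt, ae_eventually_tent_iterate_far xt,
    ae_tent_iterate_ne xt] with x hnear hfar hne
  exact exists_abs_log_hitLevel_sub_le hne hnear hfar
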